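/- arXiv:2103.13160 — 3 statements merged into one kernel-verified Lean document; each statement's English description precedes it below -/
import Mathlib

section
/- Let a, β₀, A, μ, r be positive reals and set R₀ = β₀A/(μ + r/a), φ₀ = 1 - (aβ₀ - √r)²/(aμ + r), and Δ = (aβ₀ + A - μ/β₀)² - 4r. If aβ₀ + A - μ/β₀ > 0, then Δ > 0 if and only if R₀ > φ₀ or aβ₀ + A - μ/β₀ < -2√r; in particular under aβ₀ + A - μ/β₀ > 0, Δ > 0 iff R₀ > φ₀. -/
/-!
Writing `B = aβ₀ + A - μ/β₀`, a direct computation gives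
`R₀ - φ₀ = aβ₀ (B - 2√r) / (aμ + r)`, so `R₀ > φ₀ ↔ B > 2√r`. For `B > 0` this is the same as
`B² > 4r`, i.e. `Δ > 0`, while the alternative `B < -2√r` is then impossible.
-/

open Real

lemma four_mul_lt_sq_iff {r x : ℝ} (hr : 0 ≤ r) (hx : 0 ≤ x) :
    4 * r < x ^ 2 ↔ 2 * √r < x := by
  have hsq : 4 * r = (2 * √r) ^ 2 := by rw [mul_pow, sq_sqrt hr]; norm_num
  rw [hsq, pow_lt_pow_iff_left₀ (by positivity) hx two_ne_zero]

lemma reproduction_sub_threshold {a β₀ A μ r : ℝ} (ha : 0 < a) (hb : β₀ ≠ 0) (hμ : 0 < μ)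
    (hr : 0 ≤ r) :
    β₀ * A / (μ + r / a) - (1 - (a * β₀ - √r) ^ 2 / (a * μ + r)) =
      a * β₀ * (a * β₀ + A - μ / β₀ - 2 * √r) / (a * μ + r) := by
  have hden : a * μ + r ≠ 0 := by positivity
  have hden' : μ + r / a ≠ 0 := by positivity
  field_simp
  linear_combination sq_sqrt hr

lemma threshold_lt_reproduction_iff {a β₀ A μ r : ℝ} (ha : 0 < a) (hb : 0 < β₀) (hμ : 0 < μ)
    (hr : 0 ≤ r) :
    1 - (a * β₀ - √r) ^ 2 / (a * μ + r) < β₀ * A / (μ + r / a) ↔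
      2 * √r < a * β₀ + A - μ / β₀ := by
  rw [← sub_pos, reproduction_sub_threshold ha hb.ne' hμ hr,
    div_pos_iff_of_pos_right (by positivity), mul_pos_iff_of_pos_left (by positivity), sub_pos]

theorem stmt_1_general (a β₀ A μ r : ℝ) (ha : 0 < a) (hb : 0 < β₀)
    (hμ : 0 < μ) (hr : 0 < r)
    (R₀ : ℝ) (hR₀ : R₀ = β₀ * A / (μ + r / a))
    (φ₀ : ℝ) (hφ₀ : φ₀ = 1 - (a * β₀ - Real.sqrt r) ^ 2 / (a * μ + r))
    (Δ : ℝ) (hΔ : Δ = (a * β₀ + A - μ / β₀) ^ 2 - 4 * r)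
    (hpos : a * β₀ + A - μ / β₀ > 0) :
    (Δ > 0 ↔ (R₀ > φ₀ ∨ a * β₀ + A - μ / β₀ < -2 * Real.sqrt r)) ∧
      (Δ > 0 ↔ R₀ > φ₀) := by
  have hΔR₀ : Δ > 0 ↔ R₀ > φ₀ := by
    rw [hΔ, hR₀, hφ₀, gt_iff_lt, sub_pos, four_mul_lt_sq_iff hr.le hpos.le, gt_iff_lt,
      threshold_lt_reproduction_iff ha hb hμ hr.le]
  have hnot : ¬ a * β₀ + A - μ / β₀ < -2 * √r := by
    have := sqrt_nonneg r
    linarith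
  exact ⟨by rw [hΔR₀, or_iff_left hnot], hΔR₀⟩

theorem stmt_1 (a β₀ A μ r : ℝ) (ha : 0 < a) (hb : 0 < β₀) (hA : 0 < A)
    (hμ : 0 < μ) (hr : 0 < r)
    (R₀ : ℝ) (hR₀ : R₀ = β₀ * A / (μ + r / a))
    (φ₀ : ℝ) (hφ₀ : φ₀ = 1 - (a * β₀ - Real.sqrt r) ^ 2 / (a * μ + r))
    (Δ : ℝ) (hΔ : Δ = (a * β₀ + A - μ / β₀) ^ 2 - 4 * r)
    (hpos : a * β₀ + A - μ / β₀ > 0) :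
    (Δ > 0 ↔ (R₀ > φ₀ ∨ a * β₀ + A - μ / β₀ < -2 * Real.sqrt r)) ∧
      (Δ > 0 ↔ R₀ > φ₀) :=
  stmt_1_general a β₀ A μ r ha hb hμ hr R₀ hR₀ φ₀ hφ₀ Δ hΔ hpos
end

section
/- Let a, β₀, A, μ, r > 0 with Δ = (aβ₀ + A - μ/β₀)² - 4r > 0, and let I₃ = (A - S₃)/β₀ where S₃ = (aβ₀ + A + μ/β₀ - √Δ)/2. Suppose A - aβ₀ - μ/β₀ > √Δ (so that I₃ > 0). Then (a + I₃)² > r/β₀². -/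
/-! With `x = aβ₀ + A - μ/β₀`, the quantity `(a + I₃)β₀` is the larger root `(x + √Δ)/2` of
`t² - x t + r`. The product of the two roots is `r`, so the square of the larger root exceeds `r`
by the larger root times their difference `√Δ`, which is positive as soon as `x > 0`; and `x > 0`
follows from the hypothesis `A - aβ₀ - μ/β₀ > √Δ`. -/

theorem lt_sq_half_add_sqrt_discrim {x r : ℝ} (hx : 0 < x) (hΔ : 0 < x ^ 2 - 4 * r) :
    r < ((x + √(x ^ 2 - 4 * r)) / 2) ^ 2 := by
  have hs : √(x ^ 2 - 4 * r) ^ 2 = x ^ 2 - 4 * r := Real.sq_sqrt hΔ.le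
  have hs_pos : 0 < √(x ^ 2 - 4 * r) := Real.sqrt_pos.mpr hΔ
  nlinarith [mul_pos (add_pos hx hs_pos) hs_pos]

theorem stmt_10_general (a β₀ A μ r : ℝ) (ha : 0 < a) (hb : 0 < β₀)
    (Δ : ℝ) (hΔ : Δ = (a * β₀ + A - μ / β₀) ^ 2 - 4 * r) (hΔ0 : 0 < Δ)
    (S₃ I₃ : ℝ) (hS₃ : S₃ = (a * β₀ + A + μ / β₀ - Real.sqrt Δ) / 2)
    (hI₃ : I₃ = (A - S₃) / β₀)
    (hpos : A - a * β₀ - μ / β₀ > Real.sqrt Δ) :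
    (a + I₃) ^ 2 > r / β₀ ^ 2 := by
  have h_root : (a + I₃) * β₀ = (a * β₀ + A - μ / β₀ + √Δ) / 2 := by
    subst hI₃ hS₃
    field_simp
    ring
  have hx : 0 < a * β₀ + A - μ / β₀ := by
    linarith [mul_pos ha hb, Real.sqrt_nonneg Δ]
  rw [gt_iff_lt, div_lt_iff₀ (by positivity), ← mul_pow, h_root, hΔ]
  exact lt_sq_half_add_sqrt_discrim hx (hΔ ▸ hΔ0)

theorem stmt_10 (a β₀ A μ r : ℝ) (ha : 0 < a) (hb : 0 < β₀) (hA : 0 < A)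
    (hμ : 0 < μ) (hr : 0 < r)
    (Δ : ℝ) (hΔ : Δ = (a * β₀ + A - μ / β₀) ^ 2 - 4 * r) (hΔ0 : 0 < Δ)
    (S₃ I₃ : ℝ) (hS₃ : S₃ = (a * β₀ + A + μ / β₀ - Real.sqrt Δ) / 2)
    (hI₃ : I₃ = (A - S₃) / β₀)
    (hpos : A - a * β₀ - μ / β₀ > Real.sqrt Δ) :
    (a + I₃) ^ 2 > r / β₀ ^ 2 :=
  stmt_10_general a β₀ A μ r ha hb Δ hΔ hΔ0 S₃ I₃ hS₃ hI₃ hpos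
end

section
/- Let a, β₀, A, μ, r > 0 with Δ = (aβ₀ + A - μ/β₀)² - 4r > 0 and aβ₀ + A - μ/β₀ > 0. Let I₄ = (A - S₄)/β₀ where S₄ = (aβ₀ + A + μ/β₀ + √Δ)/2, so a + I₄ = (aβ₀ + A - μ/β₀ - √Δ)/(2β₀). If a + I₄ > 0, then β₀² < r/(a + I₄)². -/
/-!
With `P = aβ₀ + A - μ/β₀` and `s = √Δ`, the number `β₀ (a + I₄) = (P - s)/2` is the smaller root
of `t² - P t + r`, whose roots have product `r`. A positive smaller root `x` of such a quadratic
satisfies `x² < x · (larger root) = r`.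
-/

theorem sq_lt_of_smaller_root_pos {P r s : ℝ} (hs : 0 < s) (hs2 : s ^ 2 = P ^ 2 - 4 * r)
    (hx : 0 < (P - s) / 2) : ((P - s) / 2) ^ 2 < r :=
  calc ((P - s) / 2) ^ 2 = (P - s) / 2 * ((P - s) / 2) := sq _
    _ < (P - s) / 2 * ((P + s) / 2) := mul_lt_mul_of_pos_left (by linarith) hx
    _ = r := by linear_combination -hs2 / 4

theorem stmt_11_general (a β₀ A μ r : ℝ) (hb : 0 < β₀)
    (Δ : ℝ) (hΔ : Δ = (a * β₀ + A - μ / β₀) ^ 2 - 4 * r) (hΔ0 : 0 < Δ)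
    (S₄ I₄ : ℝ) (hS₄ : S₄ = (a * β₀ + A + μ / β₀ + Real.sqrt Δ) / 2)
    (hI₄ : I₄ = (A - S₄) / β₀)
    (haI : 0 < a + I₄) :
    β₀ ^ 2 < r / (a + I₄) ^ 2 := by
  have hsmaller : β₀ * (a + I₄) = (a * β₀ + A - μ / β₀ - Real.sqrt Δ) / 2 := by
    rw [hI₄, hS₄]
    field_simp
    ring
  have hsq : (β₀ * (a + I₄)) ^ 2 < r := by
    rw [hsmaller]
    refine sq_lt_of_smaller_root_pos (Real.sqrt_pos.mpr hΔ0) ?_ ?_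
    · rw [Real.sq_sqrt hΔ0.le, hΔ]
    · rw [← hsmaller]
      positivity
  rw [lt_div_iff₀ (by positivity), ← mul_pow]
  exact hsq

theorem stmt_11 (a β₀ A μ r : ℝ) (ha : 0 < a) (hb : 0 < β₀) (hA : 0 < A)
    (hμ : 0 < μ) (hr : 0 < r)
    (Δ : ℝ) (hΔ : Δ = (a * β₀ + A - μ / β₀) ^ 2 - 4 * r) (hΔ0 : 0 < Δ)
    (hpos : a * β₀ + A - μ / β₀ > 0)
    (S₄ I₄ : ℝ) (hS₄ : S₄ = (a * β₀ + A + μ / β₀ + Real.sqrt Δ) / 2)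
    (hI₄ : I₄ = (A - S₄) / β₀)
    (haI : 0 < a + I₄) :
    β₀ ^ 2 < r / (a + I₄) ^ 2 :=
  stmt_11_general a β₀ A μ r hb Δ hΔ hΔ0 S₄ I₄ hS₄ hI₄ haI
end
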